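/- arXiv:1304.7078 — 3 statements merged into one kernel-verified Lean document; each statement's English description precedes it below -/
import Mathlib

section
/- Suppose Id − T is locally strongly monotone at x̄ ∈ Fix T with constants α, δ, and A = Id − T is 2-Lipschitz with A x̄ = 0. Then for Q^ε = Id − mεA and every y ∈ B(x̄;δ), ‖Q^ε y − x̄‖ ≤ (1 − mε(α − 2mε))‖y − x̄‖ whenever 0 < ε < α/(2m). Combined with the bound ‖R^ε y − Q^ε y‖ ≤ ε²β(‖y − x̄‖ + ρ) with β = 3^m − 2m − 1 and ρ = max_i‖T_i x̄ − x̄‖/2, it follows that for every δ' ∈ (0,δ] and all sufficiently small ε > 0, R^ε maps B(x̄;δ') into itself; hence dist(x̄, Fix R^ε) → 0 as ε → 0. -/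
open Filter Topology
open scoped RealInnerProductSpace

/-- The under-relaxed cyclic composition, applying `T 1` first and `T m` last. -/
noncomputable def relaxComp {H : Type*} [NormedAddCommGroup H] [Module ℝ H]
    (m : ℕ) (T : ℕ → H → H) (ε : ℝ) (x : H) : H :=
  (List.range m).foldl (fun y i => y + ε • (T (i + 1) y - y)) x

set_option linter.unusedVariables false
set_option linter.unusedSectionVars false

lemma relaxComp_succ {H : Type*} [NormedAddCommGroup H] [Module ℝ H]
    (m : ℕ) (T : ℕ → H → H) (ε : ℝ) (x : H) :
    relaxComp (m+1) T ε x = relaxComp m T ε x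
      + ε • (T (m+1) (relaxComp m T ε x) - relaxComp m T ε x) := by
  unfold relaxComp
  rw [List.range_succ, List.foldl_append]
  simp

lemma relaxComp_zero {H : Type*} [NormedAddCommGroup H] [Module ℝ H]
    (T : ℕ → H → H) (ε : ℝ) (x : H) : relaxComp 0 T ε x = x := rfl

lemma relaxComp_lip {H : Type*} [NormedAddCommGroup H] [InnerProductSpace ℝ H]
    (m : ℕ) (T : ℕ → H → H)
    (hne : ∀ i ∈ Finset.Icc 1 m, ∀ a b : H, ‖T i a - T i b‖ ≤ ‖a - b‖)
    (ε : ℝ) (hε0 : 0 ≤ ε) (hε1 : ε ≤ 1) :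
    ∀ a b : H, ‖relaxComp m T ε a - relaxComp m T ε b‖ ≤ ‖a - b‖ := by
  induction m with
  | zero => intro a b; simp [relaxComp_zero]
  | succ k ih =>
    intro a b
    have hsub : ∀ i ∈ Finset.Icc 1 k, ∀ a b : H, ‖T i a - T i b‖ ≤ ‖a - b‖ := by
      intro i hi
      exact hne i (Finset.mem_Icc.mpr ⟨(Finset.mem_Icc.mp hi).1, (Finset.mem_Icc.mp hi).2.trans (Nat.le_succ k)⟩)
    have ih' := ih hsub a b
    rw [relaxComp_succ, relaxComp_succ]
    set A := relaxComp k T ε a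
    set B := relaxComp k T ε b
    have key : A + ε • (T (k+1) A - A) - (B + ε • (T (k+1) B - B))
        = (1-ε) • (A - B) + ε • (T (k+1) A - T (k+1) B) := by
      module
    rw [key]
    have h1 : ‖(1-ε) • (A - B)‖ = (1-ε) * ‖A - B‖ := by
      rw [norm_smul, Real.norm_eq_abs, abs_of_nonneg (by linarith)]
    have h2 : ‖ε • (T (k+1) A - T (k+1) B)‖ ≤ ε * ‖A - B‖ := by
      rw [norm_smul, Real.norm_eq_abs, abs_of_nonneg hε0]
      exact mul_le_mul_of_nonneg_left
        (hne (k+1) (Finset.mem_Icc.mpr ⟨Nat.le_add_left 1 k, le_refl _⟩) A B) hε0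
    calc ‖(1-ε) • (A - B) + ε • (T (k+1) A - T (k+1) B)‖
        ≤ ‖(1-ε) • (A - B)‖ + ‖ε • (T (k+1) A - T (k+1) B)‖ := norm_add_le _ _
      _ ≤ (1-ε) * ‖A - B‖ + ε * ‖A - B‖ := by rw [h1]; linarith
      _ = ‖A - B‖ := by ring
      _ ≤ ‖a - b‖ := ih'

section
variable {H : Type*} [NormedAddCommGroup H] [InnerProductSpace ℝ H]
  {m : ℕ} {T : ℕ → H → H} {xbar : H} {c δ ε : ℝ}

lemma step_bound (hne : ∀ i ∈ Finset.Icc 1 m, ∀ a b : H, ‖T i a - T i b‖ ≤ ‖a - b‖)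
    (hc : ∀ i ∈ Finset.Icc 1 m, ‖T i xbar - xbar‖ ≤ c)
    {i : ℕ} (hi : i ∈ Finset.Icc 1 m) (z : H) :
    ‖T i z - z‖ ≤ 2 * ‖z - xbar‖ + c := by
  have h1 : T i z - z = (T i z - T i xbar) + (T i xbar - xbar) + (xbar - z) := by abel
  rw [h1]
  have := hne i hi z xbar
  have := hc i hi
  have : ‖xbar - z‖ = ‖z - xbar‖ := norm_sub_rev _ _
  calc ‖(T i z - T i xbar) + (T i xbar - xbar) + (xbar - z)‖
      ≤ ‖(T i z - T i xbar) + (T i xbar - xbar)‖ + ‖xbar - z‖ := norm_add_le _ _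
    _ ≤ ‖T i z - T i xbar‖ + ‖T i xbar - xbar‖ + ‖xbar - z‖ := by
        linarith [norm_add_le (T i z - T i xbar) (T i xbar - xbar)]
    _ ≤ 2 * ‖z - xbar‖ + c := by
        rw [norm_sub_rev xbar z]
        linarith [hne i hi z xbar, hc i hi]

lemma relaxComp_growth (hne : ∀ i ∈ Finset.Icc 1 m, ∀ a b : H, ‖T i a - T i b‖ ≤ ‖a - b‖)
    (hc : ∀ i ∈ Finset.Icc 1 m, ‖T i xbar - xbar‖ ≤ c) (hc0 : 0 ≤ c)
    (hε0 : 0 ≤ ε) (hε1 : ε ≤ 1) {y : H} (hy : ‖y - xbar‖ ≤ δ) :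
    ∀ k, k ≤ m → ‖relaxComp k T ε y - xbar‖ ≤ 3^k * (δ + c) - c := by
  have hδ0 : 0 ≤ δ := le_trans (norm_nonneg _) hy
  intro k hk
  induction k with
  | zero =>
    simpa [relaxComp] using hy.trans (by nlinarith)
  | succ j ih =>
    have hj : j ≤ m := le_trans (Nat.le_succ j) hk
    have ihj := ih hj
    rw [relaxComp_succ]
    set z := relaxComp j T ε y with hz
    have hstep : ‖T (j+1) z - z‖ ≤ 2 * ‖z - xbar‖ + c :=
      step_bound hne hc (Finset.mem_Icc.mpr ⟨Nat.le_add_left 1 j, hk⟩) z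
    have h3 : (0:ℝ) < 3 ^ j := by positivity
    calc ‖z + ε • (T (j+1) z - z) - xbar‖
        ≤ ‖z - xbar‖ + ‖ε • (T (j+1) z - z)‖ := by
          have : z + ε • (T (j+1) z - z) - xbar = (z - xbar) + ε • (T (j+1) z - z) := by abel
          rw [this]; exact norm_add_le _ _
      _ ≤ ‖z - xbar‖ + ε * (2 * ‖z - xbar‖ + c) := by
          rw [norm_smul, Real.norm_eq_abs, abs_of_nonneg hε0]
          have := mul_le_mul_of_nonneg_left hstep hε0
          linarith
      _ ≤ 3 ^ (j+1) * (δ + c) - c := by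
          have hzn : 0 ≤ ‖z - xbar‖ := norm_nonneg _
          have h2 : ε * (2 * ‖z - xbar‖ + c) ≤ 2 * ‖z - xbar‖ + c := by
            nlinarith
          have : (3:ℝ) ^ (j+1) = 3 * 3 ^ j := by ring
          nlinarith

lemma relaxComp_drift (hne : ∀ i ∈ Finset.Icc 1 m, ∀ a b : H, ‖T i a - T i b‖ ≤ ‖a - b‖)
    (hc : ∀ i ∈ Finset.Icc 1 m, ‖T i xbar - xbar‖ ≤ c) (hc0 : 0 ≤ c)
    (hε0 : 0 ≤ ε) (hε1 : ε ≤ 1) {y : H} (hy : ‖y - xbar‖ ≤ δ) :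
    ∀ k, k ≤ m → ‖relaxComp k T ε y - y‖ ≤ ε * k * (2 * 3^m * (δ + c) + c) := by
  have hδ0 : 0 ≤ δ := le_trans (norm_nonneg _) hy
  set M : ℝ := 2 * 3^m * (δ + c) + c with hM
  have hM0 : 0 ≤ M := by positivity
  intro k hk
  induction k with
  | zero => simp [relaxComp]
  | succ j ih =>
    have hj : j ≤ m := le_trans (Nat.le_succ j) hk
    have ihj := ih hj
    rw [relaxComp_succ]
    set z := relaxComp j T ε y with hz
    have hgrow : ‖z - xbar‖ ≤ 3^j * (δ + c) := by
      linarith [relaxComp_growth hne hc hc0 hε0 hε1 hy j hj]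
    have hpow : (3:ℝ)^j ≤ 3^m := by
      exact pow_le_pow_right₀ (by norm_num) hj
    have hstep : ‖T (j+1) z - z‖ ≤ M := by
      have := step_bound hne hc (Finset.mem_Icc.mpr ⟨Nat.le_add_left 1 j, hk⟩) z
      have : 2 * ‖z - xbar‖ + c ≤ M := by
        rw [hM]; nlinarith
      linarith [step_bound hne hc (Finset.mem_Icc.mpr ⟨Nat.le_add_left 1 j, hk⟩) z]
    calc ‖z + ε • (T (j+1) z - z) - y‖
        ≤ ‖z - y‖ + ‖ε • (T (j+1) z - z)‖ := by
          have : z + ε • (T (j+1) z - z) - y = (z - y) + ε • (T (j+1) z - z) := by abel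
          rw [this]; exact norm_add_le _ _
      _ ≤ ε * j * M + ε * M := by
          rw [norm_smul, Real.norm_eq_abs, abs_of_nonneg hε0]
          have := mul_le_mul_of_nonneg_left hstep hε0
          linarith
      _ = ε * (j+1) * M := by ring
      _ = ε * ((j:ℕ)+1 : ℕ) * M := by push_cast; ring

lemma relaxComp_dev (hne : ∀ i ∈ Finset.Icc 1 m, ∀ a b : H, ‖T i a - T i b‖ ≤ ‖a - b‖)
    (hc : ∀ i ∈ Finset.Icc 1 m, ‖T i xbar - xbar‖ ≤ c) (hc0 : 0 ≤ c)
    (hε0 : 0 ≤ ε) (hε1 : ε ≤ 1) {y : H} (hy : ‖y - xbar‖ ≤ δ) :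
    ∀ k, k ≤ m →
      ‖relaxComp k T ε y - y - ε • ∑ i ∈ Finset.Icc 1 k, (T i y - y)‖
        ≤ ε^2 * (2 * k^2) * (2 * 3^m * (δ + c) + c) := by
  set M : ℝ := 2 * 3^m * (δ + c) + c with hM
  have hδ0 : 0 ≤ δ := le_trans (norm_nonneg _) hy
  have hM0 : 0 ≤ M := by positivity
  intro k hk
  induction k with
  | zero => simp [relaxComp]
  | succ j ih =>
    have hj : j ≤ m := le_trans (Nat.le_succ j) hk
    have ihj := ih hj
    have hj1 : (j+1) ∈ Finset.Icc 1 m := Finset.mem_Icc.mpr ⟨Nat.le_add_left 1 j, hk⟩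
    rw [relaxComp_succ]
    set z := relaxComp j T ε y with hz
    have hdr : ‖z - y‖ ≤ ε * j * M := relaxComp_drift hne hc hc0 hε0 hε1 hy j hj
    have hsum : ∑ i ∈ Finset.Icc 1 (j+1), (T i y - y)
        = (∑ i ∈ Finset.Icc 1 j, (T i y - y)) + (T (j+1) y - y) := by
      rw [← Finset.sum_Icc_succ_top (Nat.le_add_left 1 j)]
    have key : z + ε • (T (j+1) z - z) - y - ε • ∑ i ∈ Finset.Icc 1 (j+1), (T i y - y)
        = (z - y - ε • ∑ i ∈ Finset.Icc 1 j, (T i y - y))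
          + ε • ((T (j+1) z - T (j+1) y) + (y - z)) := by
      rw [hsum]; module
    rw [key]
    have hbr : ‖(T (j+1) z - T (j+1) y) + (y - z)‖ ≤ 2 * (ε * j * M) := by
      calc ‖(T (j+1) z - T (j+1) y) + (y - z)‖
          ≤ ‖T (j+1) z - T (j+1) y‖ + ‖y - z‖ := norm_add_le _ _
        _ ≤ ‖z - y‖ + ‖z - y‖ := by
            rw [norm_sub_rev y z]; linarith [hne (j+1) hj1 z y]
        _ ≤ 2 * (ε * j * M) := by linarith
    calc ‖(z - y - ε • ∑ i ∈ Finset.Icc 1 j, (T i y - y))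
          + ε • ((T (j+1) z - T (j+1) y) + (y - z))‖
        ≤ ε^2 * (2 * j^2) * M + ε * (2 * (ε * j * M)) := by
          have h2 : ‖ε • ((T (j+1) z - T (j+1) y) + (y - z))‖ ≤ ε * (2 * (ε * j * M)) := by
            rw [norm_smul, Real.norm_eq_abs, abs_of_nonneg hε0]
            exact mul_le_mul_of_nonneg_left hbr hε0
          linarith [norm_add_le (z - y - ε • ∑ i ∈ Finset.Icc 1 j, (T i y - y))
            (ε • ((T (j+1) z - T (j+1) y) + (y - z))), ihj]
      _ ≤ ε^2 * (2 * ((j:ℝ)+1)^2) * M := by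
          nlinarith [mul_nonneg (mul_nonneg (sq_nonneg ε) hM0) (by positivity : (0:ℝ) ≤ 2*(j:ℝ)+2)]
      _ = ε^2 * (2 * ((j+1:ℕ):ℝ)^2) * M := by push_cast; ring
end

section
variable {H : Type*} [NormedAddCommGroup H] [InnerProductSpace ℝ H]
  {m : ℕ} {T : ℕ → H → H} {xbar : H}

lemma Q_eq (hm : 1 ≤ m) (ε : ℝ) (y : H) :
    y - (m*ε) • (y - (m:ℝ)⁻¹ • ∑ i ∈ Finset.Icc 1 m, T i y)
      = y + ε • ∑ i ∈ Finset.Icc 1 m, (T i y - y) := by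
  have hm0 : (m:ℝ) ≠ 0 := Nat.cast_ne_zero.mpr (by omega)
  have hcard : (Finset.Icc 1 m).card = m := by rw [Nat.card_Icc]; omega
  have hs : ∑ i ∈ Finset.Icc 1 m, (T i y - y)
      = (∑ i ∈ Finset.Icc 1 m, T i y) - (m:ℝ) • y := by
    rw [Finset.sum_sub_distrib, Finset.sum_const, hcard, Nat.cast_smul_eq_nsmul]
  rw [hs, smul_sub, smul_smul, (by field_simp : (↑m*ε) * (m:ℝ)⁻¹ = ε)]
  module

lemma Tavg_ne (hm : 1 ≤ m)
    (hne : ∀ i ∈ Finset.Icc 1 m, ∀ a b : H, ‖T i a - T i b‖ ≤ ‖a - b‖) (a b : H) :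
    ‖(m:ℝ)⁻¹ • ∑ i ∈ Finset.Icc 1 m, T i a - (m:ℝ)⁻¹ • ∑ i ∈ Finset.Icc 1 m, T i b‖
      ≤ ‖a - b‖ := by
  have hm0 : (0:ℝ) < m := by exact_mod_cast Nat.pos_of_ne_zero (by omega)
  have hcard : (Finset.Icc 1 m).card = m := by rw [Nat.card_Icc]; omega
  rw [← smul_sub, ← Finset.sum_sub_distrib, norm_smul, Real.norm_eq_abs,
    abs_of_nonneg (by positivity)]
  have h1 : ‖∑ i ∈ Finset.Icc 1 m, (T i a - T i b)‖ ≤ (m:ℝ) * ‖a - b‖ := by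
    calc ‖∑ i ∈ Finset.Icc 1 m, (T i a - T i b)‖
        ≤ ∑ i ∈ Finset.Icc 1 m, ‖T i a - T i b‖ := norm_sum_le _ _
      _ ≤ ∑ _i ∈ Finset.Icc 1 m, ‖a - b‖ := Finset.sum_le_sum (fun i hi => hne i hi a b)
      _ = (m:ℝ) * ‖a - b‖ := by rw [Finset.sum_const, hcard]; simp [mul_comm]
  calc (m:ℝ)⁻¹ * ‖∑ i ∈ Finset.Icc 1 m, (T i a - T i b)‖
      ≤ (m:ℝ)⁻¹ * ((m:ℝ) * ‖a - b‖) := by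
        exact mul_le_mul_of_nonneg_left h1 (by positivity)
    _ = ‖a - b‖ := by field_simp

lemma part1' (hm : 1 ≤ m)
    (hne : ∀ i ∈ Finset.Icc 1 m, ∀ a b : H, ‖T i a - T i b‖ ≤ ‖a - b‖)
    {α δ : ℝ} (hα : 0 < α) (hδ : 0 < δ)
    (hfix : (m:ℝ)⁻¹ • (∑ i ∈ Finset.Icc 1 m, T i xbar) = xbar)
    (hmono : ∀ y ∈ Metric.closedBall xbar δ,
      α * ‖y - xbar‖ ^ 2
        ≤ ⟪y - xbar, y - (m:ℝ)⁻¹ • (∑ i ∈ Finset.Icc 1 m, T i y)⟫) :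
    ∀ ε : ℝ, 0 < ε → ε < α / (2 * m) → ∀ y ∈ Metric.closedBall xbar δ,
      ‖(y - (m * ε) • (y - (m:ℝ)⁻¹ • (∑ i ∈ Finset.Icc 1 m, T i y))) - xbar‖
        ≤ (1 - m * ε * (α - 2 * m * ε)) * ‖y - xbar‖ := by
  intro ε hε hεα y hy
  have hm0 : (0:ℝ) < m := by exact_mod_cast Nat.pos_of_ne_zero (by omega)
  set u := y - xbar with hu
  set A := y - (m:ℝ)⁻¹ • ∑ i ∈ Finset.Icc 1 m, T i y with hA
  have hA2 : ‖A‖ ≤ 2 * ‖u‖ := by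
    have h1 : A = u - ((m:ℝ)⁻¹ • ∑ i ∈ Finset.Icc 1 m, T i y
        - (m:ℝ)⁻¹ • ∑ i ∈ Finset.Icc 1 m, T i xbar) := by
      rw [hA, hu, hfix]; abel
    rw [h1]
    calc ‖u - _‖ ≤ ‖u‖ + ‖(m:ℝ)⁻¹ • ∑ i ∈ Finset.Icc 1 m, T i y
        - (m:ℝ)⁻¹ • ∑ i ∈ Finset.Icc 1 m, T i xbar‖ := norm_sub_le _ _
      _ ≤ 2 * ‖u‖ := by linarith [Tavg_ne hm hne y xbar]
  have hip : α * ‖u‖^2 ≤ ⟪u, A⟫ := hmono y hy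
  have hCS : ⟪u, A⟫ ≤ ‖u‖ * ‖A‖ := real_inner_le_norm u A
  have ht : 0 < (m:ℝ) * ε := by positivity
  have htα : 2 * ((m:ℝ) * ε) < α := by
    rw [lt_div_iff₀ (by positivity)] at hεα
    nlinarith
  have hgoal : (y - (m * ε) • A) - xbar = u - ((m:ℝ)*ε) • A := by rw [hu]; abel
  have hre : (1 - (m:ℝ) * ε * (α - 2 * (m:ℝ) * ε)) = 1 - ((m:ℝ)*ε) * (α - 2*((m:ℝ)*ε)) := by
    ring
  rw [hgoal, hre]
  by_cases hun : ‖u‖ = 0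
  · have hu0 : u = 0 := norm_eq_zero.mp hun
    have hy0 : y = xbar := by rwa [hu, sub_eq_zero] at hu0
    have hA0 : A = 0 := by rw [hA, hy0, hfix]; abel
    simp [hu0, hA0, hun]
  · have hupos : 0 < ‖u‖ := lt_of_le_of_ne (norm_nonneg _) (Ne.symm hun)
    have hα2 : α ≤ 2 := by
      nlinarith [mul_le_mul_of_nonneg_left hA2 (norm_nonneg u), mul_pos hupos hupos]
    set t := (m:ℝ) * ε with htdef
    have hC : 0 ≤ 1 - t * (α - 2 * t) := by nlinarith [sq_nonneg (α - 4*t)]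
    have expand : ‖u - t • A‖^2 = ‖u‖^2 - 2*t*⟪u,A⟫ + t^2*‖A‖^2 := by
      rw [@norm_sub_sq_real, real_inner_smul_right, norm_smul, Real.norm_eq_abs,
        abs_of_nonneg (le_of_lt ht)]
      ring
    have hA2' : ‖A‖^2 ≤ 4*‖u‖^2 := by nlinarith [norm_nonneg A, norm_nonneg u]
    have hsq : ‖u - t • A‖^2 ≤ ((1 - t * (α - 2*t)) * ‖u‖)^2 := by
      nlinarith [sq_nonneg (t*(α - 2*t)*‖u‖), mul_le_mul_of_nonneg_left hip (le_of_lt ht)]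
    have := Real.sqrt_le_sqrt hsq
    rwa [Real.sqrt_sq (norm_nonneg _),
      Real.sqrt_sq (mul_nonneg hC (norm_nonneg _))] at this
end

lemma exists_reg_zero {H : Type*} [NormedAddCommGroup H] [InnerProductSpace ℝ H]
    [CompleteSpace H] (F : H → H)
    (hmonoF : ∀ a b : H, 0 ≤ ⟪a - b, F a - F b⟫)
    (hlipF : ∀ a b : H, ‖F a - F b‖ ≤ 2 * ‖a - b‖)
    (xbar : H) {μ : ℝ} (hμ : 0 < μ) :
    ∃ z : H, F z + μ • (z - xbar) = 0 := by
  set lam : ℝ := μ / (2 + μ)^2 with hlam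
  have hlam0 : 0 < lam := by positivity
  set Φ : H → H := fun z => z - lam • (F z + μ • (z - xbar)) with hΦ
  set qs : ℝ := 1 - μ^2 / (2 + μ)^2 with hqs
  have h2μ : (0:ℝ) < (2 + μ)^2 := by positivity
  have hqs0 : 0 ≤ qs := by
    rw [hqs, sub_nonneg, div_le_one h2μ]
    nlinarith
  have hqs1 : qs < 1 := by
    rw [hqs]
    have : 0 < μ^2 / (2 + μ)^2 := by positivity
    linarith
  set q : ℝ := Real.sqrt qs with hq
  have hq0 : 0 ≤ q := Real.sqrt_nonneg _
  have hq2 : q^2 = qs := Real.sq_sqrt hqs0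
  have hq1 : q < 1 := by
    rw [hq]
    calc Real.sqrt qs < Real.sqrt 1 := Real.sqrt_lt_sqrt hqs0 hqs1
      _ = 1 := Real.sqrt_one
  have hkey : ∀ a b : H, ‖Φ a - Φ b‖ ≤ q * ‖a - b‖ := by
    intro a b
    set d := a - b with hd
    set ΔF := F a - F b with hΔ
    have hΦd : Φ a - Φ b = d - lam • (ΔF + μ • d) := by
      rw [hΦ]; simp only []; rw [hd, hΔ]; module
    have hub : ‖ΔF + μ • d‖ ≤ (2 + μ) * ‖d‖ := by
      calc ‖ΔF + μ • d‖ ≤ ‖ΔF‖ + ‖μ • d‖ := norm_add_le _ _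
        _ ≤ 2 * ‖d‖ + μ * ‖d‖ := by
            rw [norm_smul, Real.norm_eq_abs, abs_of_pos hμ]
            linarith [hlipF a b]
        _ = (2 + μ) * ‖d‖ := by ring
    have hip : μ * ‖d‖^2 ≤ ⟪d, ΔF + μ • d⟫ := by
      rw [inner_add_right, real_inner_smul_right, real_inner_self_eq_norm_sq]
      have := hmonoF a b
      nlinarith
    have hexp : ‖d - lam • (ΔF + μ • d)‖^2
        = ‖d‖^2 - 2*lam*⟪d, ΔF + μ • d⟫ + lam^2 * ‖ΔF + μ • d‖^2 := by
      rw [@norm_sub_sq_real, real_inner_smul_right, norm_smul, Real.norm_eq_abs,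
        abs_of_pos hlam0]
      ring
    have hsq : ‖Φ a - Φ b‖^2 ≤ (q * ‖d‖)^2 := by
      rw [hΦd, hexp, mul_pow, hq2, hqs]
      have h1 : lam^2 * ‖ΔF + μ • d‖^2 ≤ lam^2 * ((2+μ)^2 * ‖d‖^2) := by
        have := mul_le_mul_of_nonneg_left
          (mul_self_le_mul_self (norm_nonneg _) hub) (le_of_lt (mul_pos hlam0 hlam0))
        nlinarith [norm_nonneg (ΔF + μ • d), norm_nonneg d]
      have h2 : lam^2 * ((2+μ)^2 * ‖d‖^2) = μ^2/(2+μ)^2 * ‖d‖^2 := by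
        rw [hlam]; field_simp
      have h3 : 2*lam*(μ * ‖d‖^2) ≤ 2*lam*⟪d, ΔF + μ • d⟫ :=
        mul_le_mul_of_nonneg_left hip (by positivity)
      have h4 : 2*lam*μ = 2 * (μ^2/(2+μ)^2) := by rw [hlam]; field_simp
      nlinarith
    have := Real.sqrt_le_sqrt hsq
    rwa [Real.sqrt_sq (norm_nonneg _), Real.sqrt_sq (by positivity)] at this
  have hK : ContractingWith ⟨q, hq0⟩ Φ := by
    constructor
    · exact_mod_cast hq1
    · apply LipschitzWith.of_dist_le_mul
      intro a b
      rw [dist_eq_norm, dist_eq_norm]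
      exact hkey a b
  obtain ⟨z, hz, -⟩ := hK.exists_fixedPoint (Φ xbar) (by simp [edist_dist])
  refine ⟨z, ?_⟩
  have : z - lam • (F z + μ • (z - xbar)) = z := hz
  have h0 : lam • (F z + μ • (z - xbar)) = 0 := by
    have := sub_eq_self.mp this
    exact this
  rcases smul_eq_zero.mp h0 with h | h
  · exact absurd h (ne_of_gt hlam0)
  · exact h

section
variable {H : Type*} [NormedAddCommGroup H] [InnerProductSpace ℝ H]
  {m : ℕ} {T : ℕ → H → H} {xbar : H} {c δ ε : ℝ}

lemma approx (hm : 1 ≤ m)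
    (hne : ∀ i ∈ Finset.Icc 1 m, ∀ a b : H, ‖T i a - T i b‖ ≤ ‖a - b‖)
    (hc : ∀ i ∈ Finset.Icc 1 m, ‖T i xbar - xbar‖ ≤ c) (hc0 : 0 ≤ c)
    (hε0 : 0 ≤ ε) (hε1 : ε ≤ 1) {y : H} (hy : ‖y - xbar‖ ≤ δ) :
    ‖relaxComp m T ε y
        - (y - (m*ε) • (y - (m:ℝ)⁻¹ • ∑ i ∈ Finset.Icc 1 m, T i y))‖
      ≤ ε^2 * (2 * m^2 * (2 * 3^m * (δ + c) + c)) := by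
  rw [Q_eq hm]
  have h1 : relaxComp m T ε y - (y + ε • ∑ i ∈ Finset.Icc 1 m, (T i y - y))
      = relaxComp m T ε y - y - ε • ∑ i ∈ Finset.Icc 1 m, (T i y - y) := by abel
  rw [h1]
  have := relaxComp_dev (xbar := xbar) (δ := δ) hne hc hc0 hε0 hε1 hy m le_rfl
  calc _ ≤ ε^2 * (2 * (m:ℝ)^2) * (2 * 3^m * (δ + c) + c) := this
    _ = ε^2 * (2 * m^2 * (2 * 3^m * (δ + c) + c)) := by ring

lemma part2 (hm : 1 ≤ m)
    (hne : ∀ i ∈ Finset.Icc 1 m, ∀ a b : H, ‖T i a - T i b‖ ≤ ‖a - b‖)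
    {α : ℝ} (hα : 0 < α) (hδ : 0 < δ)
    (hfix : (m:ℝ)⁻¹ • (∑ i ∈ Finset.Icc 1 m, T i xbar) = xbar)
    (hmono : ∀ y ∈ Metric.closedBall xbar δ,
      α * ‖y - xbar‖ ^ 2
        ≤ ⟪y - xbar, y - (m:ℝ)⁻¹ • (∑ i ∈ Finset.Icc 1 m, T i y)⟫)
    (hc : ∀ i ∈ Finset.Icc 1 m, ‖T i xbar - xbar‖ ≤ c) (hc0 : 0 ≤ c) :
    ∀ δ' : ℝ, 0 < δ' → δ' ≤ δ → ∃ ε₀ > 0, ∀ ε : ℝ, 0 < ε → ε ≤ ε₀ →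
      Set.MapsTo (relaxComp m T ε) (Metric.closedBall xbar δ')
        (Metric.closedBall xbar δ') := by
  intro δ' hδ'0 hδ'δ
  have hm0 : (0:ℝ) < m := by exact_mod_cast Nat.pos_of_ne_zero (by omega)
  obtain ⟨K, hK0, hK⟩ : ∃ K : ℝ, 0 < K ∧ K = 2 * m^2 * (2 * 3^m * (δ + c) + c) := by
    refine ⟨_, ?_, rfl⟩
    have h3 : (0:ℝ) < 3^m := by positivity
    have h4 : (0:ℝ) < 2 * 3^m * (δ + c) + c := by nlinarith
    have h5 : (0:ℝ) < 2 * (m:ℝ)^2 := by nlinarith [mul_pos hm0 hm0]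
    exact mul_pos h5 h4
  refine ⟨min (min 1 (α/(4*m))) (min (1/(m*α)) (m*α*δ'/(2*K))), by positivity, ?_⟩
  intro ε hε hεle y hy
  have hε1 : ε ≤ 1 := le_trans hεle (le_trans (min_le_left _ _) (min_le_left _ _))
  have hε2 : ε ≤ α/(4*m) := le_trans hεle (le_trans (min_le_left _ _) (min_le_right _ _))
  have hε3 : ε ≤ 1/(m*α) := le_trans hεle (le_trans (min_le_right _ _) (min_le_left _ _))
  have hε4 : ε ≤ m*α*δ'/(2*K) := le_trans hεle (le_trans (min_le_right _ _) (min_le_right _ _))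
  rw [Metric.mem_closedBall, dist_eq_norm] at hy ⊢
  have hyδ : ‖y - xbar‖ ≤ δ := le_trans hy hδ'δ
  have hyb : y ∈ Metric.closedBall xbar δ := by
    rw [Metric.mem_closedBall, dist_eq_norm]; exact hyδ
  have hεα : ε < α / (2*m) := by
    have : α/(4*m) < α/(2*m) := by
      apply div_lt_div_of_pos_left hα (by positivity)
      nlinarith
    linarith
  have hma : (m:ℝ)*ε*α ≤ 1 := by
    rw [le_div_iff₀ (by positivity)] at hε3
    linarith
  have hmε0 : (0:ℝ) ≤ (m:ℝ)*ε := by positivity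
  have hC1 : (m:ℝ) * ε * (α - 2 * m * ε) ≤ (m:ℝ)*ε*α := by
    nlinarith [sq_nonneg ((m:ℝ)*ε)]
  have hC0 : 0 ≤ 1 - (m:ℝ) * ε * (α - 2 * m * ε) := by linarith
  have h4 : 2*((m:ℝ)*ε) ≤ α/2 := by
    rw [le_div_iff₀ (by positivity : (0:ℝ) < 4*m)] at hε2
    nlinarith
  have hChalf : (1:ℝ) - m * ε * (α - 2 * m * ε) ≤ 1 - m*ε*α/2 := by
    have h5 := mul_le_mul_of_nonneg_left (show α/2 ≤ α - 2*((m:ℝ)*ε) by linarith) hmε0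
    nlinarith
  have hεK : ε * K ≤ m*α*δ'/2 := by
    rw [le_div_iff₀ (by positivity)] at hε4
    linarith
  have h1 := part1' hm hne hα hδ hfix hmono ε hε hεα y hyb
  have h2 := approx (δ := δ) hm hne hc hc0 (le_of_lt hε) hε1 hyδ
  rw [← hK] at h2
  obtain ⟨Q, hQ⟩ : ∃ Q : H, Q = y - (m*ε) • (y - (m:ℝ)⁻¹ • ∑ i ∈ Finset.Icc 1 m, T i y) :=
    ⟨_, rfl⟩
  rw [← hQ] at h1 h2
  have htri : ‖relaxComp m T ε y - xbar‖
      ≤ (1 - m * ε * (α - 2 * m * ε)) * ‖y - xbar‖ + ε^2 * K := by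
    have t1 : ‖relaxComp m T ε y - xbar‖ ≤ ‖relaxComp m T ε y - Q‖ + ‖Q - xbar‖ :=
      norm_sub_le_norm_sub_add_norm_sub _ _ _
    linarith
  have b1 : (1 - m * ε * (α - 2 * m * ε)) * ‖y - xbar‖ ≤ (1 - m*ε*α/2) * δ' := by
    calc (1 - m * ε * (α - 2 * m * ε)) * ‖y - xbar‖
        ≤ (1 - m * ε * (α - 2 * m * ε)) * δ' := mul_le_mul_of_nonneg_left hy hC0
      _ ≤ (1 - m*ε*α/2) * δ' := mul_le_mul_of_nonneg_right hChalf (le_of_lt hδ'0)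
  have b2 : ε^2 * K ≤ ε * (m*α*δ'/2) := by
    have b2' : ε * (ε * K) ≤ ε * (m*α*δ'/2) := mul_le_mul_of_nonneg_left hεK (le_of_lt hε)
    calc ε^2 * K = ε * (ε * K) := by ring
      _ ≤ ε * (m*α*δ'/2) := b2'
  calc ‖relaxComp m T ε y - xbar‖
      ≤ (1 - m * ε * (α - 2 * m * ε)) * ‖y - xbar‖ + ε^2 * K := htri
    _ ≤ (1 - m*ε*α/2) * δ' + ε * (m*α*δ'/2) := add_le_add b1 b2
    _ = δ' := by ring
end

section
variable {H : Type*} [NormedAddCommGroup H] [InnerProductSpace ℝ H]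
  {m : ℕ} {T : ℕ → H → H} {xbar : H} {c δ : ℝ}

set_option maxHeartbeats 1000000 in
lemma key_fixed [CompleteSpace H] (hm : 1 ≤ m)
    (hne : ∀ i ∈ Finset.Icc 1 m, ∀ a b : H, ‖T i a - T i b‖ ≤ ‖a - b‖)
    {α : ℝ} (hα : 0 < α) (hδ : 0 < δ)
    (hmono : ∀ y ∈ Metric.closedBall xbar δ,
      α * ‖y - xbar‖ ^ 2
        ≤ ⟪y - xbar, y - (m:ℝ)⁻¹ • (∑ i ∈ Finset.Icc 1 m, T i y)⟫)
    (hc : ∀ i ∈ Finset.Icc 1 m, ‖T i xbar - xbar‖ ≤ c) (hc0 : 0 ≤ c)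
    {K : ℝ} (hK : K = 2 * m^2 * (2 * 3^m * (δ + c) + c)) (hK0 : 0 < K) :
    ∀ ε : ℝ, 0 < ε → ε ≤ 1 → ε ≤ m*α*δ/(2*K) →
      ∃ z : H, relaxComp m T ε z = z ∧ ‖z - xbar‖ ≤ 2*K/(m*α) * ε := by
  intro ε hε hε1 hεδ
  have hm0 : (0:ℝ) < m := by exact_mod_cast Nat.pos_of_ne_zero (by omega)
  have hε2 : (0:ℝ) < ε^2 := by positivity
  set R : H → H := relaxComp m T ε with hR
  have hRne : ∀ a b : H, ‖R a - R b‖ ≤ ‖a - b‖ := relaxComp_lip m T hne ε hε.le hε1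
  set G : H → H := fun z => z - R z with hG
  have hGd : ∀ a b : H, G a - G b = (a - b) - (R a - R b) := by
    intro a b; simp only [hG]; abel
  have hGmono : ∀ a b : H, 0 ≤ ⟪a - b, G a - G b⟫ := by
    intro a b
    rw [hGd, inner_sub_right, real_inner_self_eq_norm_sq]
    have h1 := real_inner_le_norm (a - b) (R a - R b)
    have h2 := mul_le_mul_of_nonneg_left (hRne a b) (norm_nonneg (a - b))
    nlinarith [norm_nonneg (a - b)]
  have hGlip : ∀ a b : H, ‖G a - G b‖ ≤ 2 * ‖a - b‖ := by
    intro a b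
    rw [hGd]
    calc ‖(a - b) - (R a - R b)‖ ≤ ‖a - b‖ + ‖R a - R b‖ := norm_sub_le _ _
      _ ≤ 2 * ‖a - b‖ := by linarith [hRne a b]
  set r : ℝ := 2*K/(m*α) * ε with hr
  have hr0 : 0 < r := by positivity
  have hrδ : r ≤ δ := by
    rw [hr]
    calc 2*K/(m*α) * ε ≤ 2*K/(m*α) * (m*α*δ/(2*K)) :=
          mul_le_mul_of_nonneg_left hεδ (by positivity)
      _ = δ := by field_simp
  have hmul : (m:ℝ)*ε*α*r = 2*K*ε^2 := by rw [hr]; field_simp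
  -- approximation of G by m ε A inside the ball
  have hGA : ∀ y : H, ‖y - xbar‖ ≤ δ →
      ‖G y - (m*ε) • (y - (m:ℝ)⁻¹ • ∑ i ∈ Finset.Icc 1 m, T i y)‖ ≤ ε^2*K := by
    intro y hy
    have h1 := approx (xbar := xbar) (δ := δ) hm hne hc hc0 hε.le hε1 hy
    rw [← hK] at h1
    have heq : G y - (m*ε) • (y - (m:ℝ)⁻¹ • ∑ i ∈ Finset.Icc 1 m, T i y)
        = -(relaxComp m T ε y
            - (y - (m*ε) • (y - (m:ℝ)⁻¹ • ∑ i ∈ Finset.Icc 1 m, T i y))) := by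
      simp only [hG, hR]; abel
    rw [heq, norm_neg]
    exact h1
  -- coercivity on the sphere of radius r
  have hsphere : ∀ y : H, ‖y - xbar‖ = r → r * (ε^2*K) ≤ ⟪y - xbar, G y⟫ := by
    intro y hyr
    have hyδ : ‖y - xbar‖ ≤ δ := hyr.le.trans hrδ
    have hyb : y ∈ Metric.closedBall xbar δ := by
      rw [Metric.mem_closedBall, dist_eq_norm]; exact hyδ
    have hip := hmono y hyb
    have herr := hGA y hyδ
    obtain ⟨A, hA⟩ : ∃ A : H, A = y - (m:ℝ)⁻¹ • ∑ i ∈ Finset.Icc 1 m, T i y := ⟨_, rfl⟩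
    rw [← hA] at hip herr
    have hdecomp : G y = (↑m*ε)•A + (G y - (↑m*ε)•A) := by abel
    have hsplit : ⟪y - xbar, G y⟫
        = (↑m*ε)*⟪y - xbar, A⟫ + ⟪y - xbar, G y - (↑m*ε)•A⟫ := by
      conv_lhs => rw [hdecomp]
      rw [inner_add_right, real_inner_smul_right]
    have habs := abs_real_inner_le_norm (y - xbar) (G y - (↑m*ε)•A)
    have hneg := neg_abs_le ⟪y - xbar, G y - (↑m*ε)•A⟫
    have hberr : ‖y - xbar‖ * ‖G y - (↑m*ε)•A‖ ≤ r * (ε^2*K) := by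
      rw [hyr]
      exact mul_le_mul_of_nonneg_left herr hr0.le
    rw [hyr] at hip
    have hiplow := mul_le_mul_of_nonneg_left hip (by positivity : (0:ℝ) ≤ ↑m*ε)
    have hq : (↑m*ε)*(α*r^2) = 2*K*ε^2*r := by linear_combination r * hmul
    linarith
  -- coercivity outside the ball of radius r
  have hout : ∀ z : H, r ≤ ‖z - xbar‖ → 0 < ⟪z - xbar, G z⟫ := by
    intro z hzr
    have hn0 : 0 < ‖z - xbar‖ := lt_of_lt_of_le hr0 hzr
    set t : ℝ := r / ‖z - xbar‖ with htdef
    have ht0 : 0 < t := by positivity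
    have ht1 : t ≤ 1 := (div_le_one hn0).mpr hzr
    set y : H := xbar + t • (z - xbar) with hy
    have hyx : y - xbar = t • (z - xbar) := by rw [hy]; abel
    have hyr : ‖y - xbar‖ = r := by
      rw [hyx, norm_smul, Real.norm_eq_abs, abs_of_pos ht0, htdef]
      field_simp
    have hs := hsphere y hyr
    rw [hyx, real_inner_smul_left] at hs
    have hpos : 0 < ⟪z - xbar, G y⟫ := by
      nlinarith [mul_pos hr0 (mul_pos hε2 hK0)]
    by_cases hteq : t = 1
    · have hzy : y = z := by rw [hy, hteq, one_smul]; abel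
      rwa [hzy] at hpos
    · have ht1' : t < 1 := lt_of_le_of_ne ht1 hteq
      have hmo := hGmono z y
      have hzy : z - y = (1 - t) • (z - xbar) := by rw [hy]; module
      rw [hzy, real_inner_smul_left, inner_sub_right] at hmo
      nlinarith [hpos, hmo]
  -- regularized solutions
  set μ : ℕ → ℝ := fun n => 1/(n+1) with hμ
  have hμpos : ∀ n, 0 < μ n := fun n => by positivity
  have hzex : ∀ n, ∃ z : H, G z + μ n • (z - xbar) = 0 :=
    fun n => exists_reg_zero G hGmono hGlip xbar (hμpos n)
  choose z hz using hzex
  have hGz : ∀ n, G (z n) = (-(μ n)) • (z n - xbar) := by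
    intro n
    rw [neg_smul]
    exact eq_neg_of_add_eq_zero_left (hz n)
  have hzb : ∀ n, ‖z n - xbar‖ ≤ r := by
    intro n
    by_contra hcon
    push_neg at hcon
    have h1 := hout (z n) hcon.le
    rw [hGz n, real_inner_smul_right, real_inner_self_eq_norm_sq] at h1
    have h2 : 0 ≤ μ n * ‖z n - xbar‖^2 := mul_nonneg (hμpos n).le (sq_nonneg _)
    linarith
  have hpair : ∀ p q : ℕ, (μ p + μ q) * ‖z p - z q‖^2
      ≤ (μ p - μ q) * (‖z q - xbar‖^2 - ‖z p - xbar‖^2) := by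
    intro p q
    have hmo := hGmono (z p) (z q)
    rw [hGz p, hGz q] at hmo
    have hzz : z p - z q = (z p - xbar) - (z q - xbar) := by abel
    rw [hzz] at hmo ⊢
    set a := z p - xbar
    set b := z q - xbar
    have hexp : ⟪a - b, (-(μ p)) • a - (-(μ q)) • b⟫
        = -(μ p) * ⟪a, a⟫ + μ q * ⟪a, b⟫ + μ p * ⟪a, b⟫ - μ q * ⟪b, b⟫ := by
      rw [inner_sub_left, inner_sub_right, inner_sub_right, real_inner_smul_right,
        real_inner_smul_right, real_inner_smul_right, real_inner_smul_right,
        real_inner_comm b a]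
      ring
    rw [hexp] at hmo
    rw [real_inner_self_eq_norm_sq, real_inner_self_eq_norm_sq] at hmo
    rw [@norm_sub_sq_real]
    nlinarith [hmo]
  have hanr : ∀ n, ‖z n - xbar‖^2 ≤ r^2 := by
    intro n
    have := hzb n
    nlinarith [norm_nonneg (z n - xbar)]
  have hmonoa : Monotone (fun n => ‖z n - xbar‖^2) := by
    intro p q hpq
    rcases eq_or_lt_of_le hpq with rfl | hlt
    · exact le_rfl
    have hμlt : μ q < μ p := by
      simp only [hμ]
      have hpq' : (p:ℝ) < q := by exact_mod_cast hlt
      exact one_div_lt_one_div_of_lt (by positivity) (by linarith)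
    have h2 := hpair p q
    have h3 : 0 ≤ (μ p + μ q) * ‖z p - z q‖^2 :=
      mul_nonneg (by linarith [hμpos p, hμpos q]) (sq_nonneg _)
    simp only []
    nlinarith [h2, h3]
  have hbdd : BddAbove (Set.range fun n => ‖z n - xbar‖^2) := by
    refine ⟨r^2, ?_⟩
    rintro x ⟨n, rfl⟩
    exact hanr n
  have hL := tendsto_atTop_ciSup hmonoa hbdd
  have hca : CauchySeq (fun n => ‖z n - xbar‖^2) := hL.cauchySeq
  have hcz : CauchySeq z := by
    rw [Metric.cauchySeq_iff]
    intro η hη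
    obtain ⟨N, hN⟩ := Metric.cauchySeq_iff.mp hca (η^2) (by positivity)
    refine ⟨N, fun p hp q hq => ?_⟩
    have h1 := hN p hp q hq
    rw [Real.dist_eq] at h1
    have h3 : ‖z p - z q‖^2 ≤ |‖z q - xbar‖^2 - ‖z p - xbar‖^2| := by
      have hsum : 0 < μ p + μ q := by linarith [hμpos p, hμpos q]
      have h4 : (μ p + μ q) * ‖z p - z q‖^2
          ≤ (μ p + μ q) * |‖z q - xbar‖^2 - ‖z p - xbar‖^2| := by
        calc (μ p + μ q) * ‖z p - z q‖^2
            ≤ (μ p - μ q) * (‖z q - xbar‖^2 - ‖z p - xbar‖^2) := hpair p q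
          _ ≤ |(μ p - μ q) * (‖z q - xbar‖^2 - ‖z p - xbar‖^2)| := le_abs_self _
          _ = |μ p - μ q| * |‖z q - xbar‖^2 - ‖z p - xbar‖^2| := abs_mul _ _
          _ ≤ (μ p + μ q) * |‖z q - xbar‖^2 - ‖z p - xbar‖^2| := by
              apply mul_le_mul_of_nonneg_right _ (abs_nonneg _)
              rw [abs_le]
              constructor <;> nlinarith [hμpos p, hμpos q]
      exact le_of_mul_le_mul_left h4 hsum
    rw [dist_eq_norm]
    have habs : |‖z q - xbar‖^2 - ‖z p - xbar‖^2| < η^2 := by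
      rw [abs_sub_comm]
      exact h1
    nlinarith [norm_nonneg (z p - z q)]
  obtain ⟨zl, hzl⟩ := cauchySeq_tendsto_of_complete hcz
  have hzlr : ‖zl - xbar‖ ≤ r := by
    have ht : Filter.Tendsto (fun n => ‖z n - xbar‖) atTop (𝓝 ‖zl - xbar‖) :=
      ((hzl.sub_const xbar).norm)
    exact le_of_tendsto ht (Filter.Eventually.of_forall hzb)
  have hGzl : G zl = 0 := by
    have hb : ∀ n, ‖G zl‖ ≤ 2*‖zl - z n‖ + μ n * r := by
      intro n
      have h1 : ‖G zl - G (z n)‖ ≤ 2*‖zl - z n‖ := hGlip _ _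
      have h2 : ‖G (z n)‖ ≤ μ n * r := by
        rw [hGz n, norm_smul, Real.norm_eq_abs, abs_neg, abs_of_pos (hμpos n)]
        exact mul_le_mul_of_nonneg_left (hzb n) (hμpos n).le
      have h3 : ‖G zl‖ ≤ ‖G zl - G (z n)‖ + ‖G (z n)‖ := by
        have := norm_add_le (G zl - G (z n)) (G (z n))
        simpa using this
      linarith
    have hlim : Filter.Tendsto (fun n => 2*‖zl - z n‖ + μ n * r) atTop (𝓝 0) := by
      have t1 : Filter.Tendsto (fun n => ‖zl - z n‖) atTop (𝓝 0) := by
        have t0 : Filter.Tendsto (fun n => zl - z n) atTop (𝓝 (zl - zl)) :=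
          Filter.Tendsto.sub tendsto_const_nhds hzl
        have := t0.norm
        simpa using this
      have t2 : Filter.Tendsto μ atTop (𝓝 0) := by
        simp only [hμ]
        exact tendsto_one_div_add_atTop_nhds_zero_nat
      have h5 := (t1.const_mul 2).add (t2.mul_const r)
      rw [(by ring : (2:ℝ)*0 + 0*r = 0)] at h5
      exact h5
    have hle : ‖G zl‖ ≤ 0 := ge_of_tendsto hlim (Filter.Eventually.of_forall hb)
    exact norm_le_zero_iff.mp hle
  refine ⟨zl, ?_, hzlr⟩
  have h0 : zl - relaxComp m T ε zl = 0 := hGzl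
  exact (sub_eq_zero.mp h0).symm
end

set_option maxHeartbeats 1000000 in
theorem stmt17 {H : Type*} [NormedAddCommGroup H] [InnerProductSpace ℝ H] [CompleteSpace H]
    (m : ℕ) (hm : 2 ≤ m) (T : ℕ → H → H)
    (hne : ∀ i ∈ Finset.Icc 1 m, LipschitzWith 1 (T i))
    (xbar : H) (α δ : ℝ) (hα : 0 < α) (hδ : 0 < δ)
    (hfix : (m:ℝ)⁻¹ • (∑ i ∈ Finset.Icc 1 m, T i xbar) = xbar)
    (huniq : ∀ y, (m:ℝ)⁻¹ • (∑ i ∈ Finset.Icc 1 m, T i y) = y → y = xbar)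
    (hmono : ∀ y ∈ Metric.closedBall xbar δ,
      α * ‖y - xbar‖ ^ 2
        ≤ ⟪y - xbar, y - (m:ℝ)⁻¹ • (∑ i ∈ Finset.Icc 1 m, T i y)⟫) :
    (∀ ε : ℝ, 0 < ε → ε < α / (2 * m) → ∀ y ∈ Metric.closedBall xbar δ,
      ‖(y - (m * ε) • (y - (m:ℝ)⁻¹ • (∑ i ∈ Finset.Icc 1 m, T i y))) - xbar‖
        ≤ (1 - m * ε * (α - 2 * m * ε)) * ‖y - xbar‖) ∧
    (∀ δ' : ℝ, 0 < δ' → δ' ≤ δ → ∃ ε₀ > 0, ∀ ε : ℝ, 0 < ε → ε ≤ ε₀ →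
      Set.MapsTo (relaxComp m T ε) (Metric.closedBall xbar δ')
        (Metric.closedBall xbar δ')) ∧
    (∀ᶠ ε in 𝓝[Set.Ioo (0:ℝ) 1] 0, {y | relaxComp m T ε y = y}.Nonempty) ∧
    Tendsto (fun ε => Metric.infDist xbar {y | relaxComp m T ε y = y})
      (𝓝[Set.Ioo (0:ℝ) 1] 0) (𝓝 0) := by
  have hm1 : 1 ≤ m := by omega
  have hm0 : (0:ℝ) < m := by exact_mod_cast Nat.pos_of_ne_zero (by omega)
  have hne' : ∀ i ∈ Finset.Icc 1 m, ∀ a b : H, ‖T i a - T i b‖ ≤ ‖a - b‖ := by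
    intro i hi a b
    have := (hne i hi).dist_le_mul a b
    simpa [dist_eq_norm] using this
  obtain ⟨c, hc0, hc⟩ : ∃ c : ℝ, 0 ≤ c ∧ ∀ i ∈ Finset.Icc 1 m, ‖T i xbar - xbar‖ ≤ c := by
    refine ⟨∑ i ∈ Finset.Icc 1 m, ‖T i xbar - xbar‖,
      Finset.sum_nonneg (fun i _ => norm_nonneg _), fun i hi => ?_⟩
    exact Finset.single_le_sum (f := fun j => ‖T j xbar - xbar‖) (fun j _ => norm_nonneg _) hi
  obtain ⟨K, hK0, hK⟩ : ∃ K : ℝ, 0 < K ∧ K = 2 * m^2 * (2 * 3^m * (δ + c) + c) := by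
    refine ⟨_, ?_, rfl⟩
    have h3 : (0:ℝ) < 3^m := by positivity
    have h4 : (0:ℝ) < 2 * 3^m * (δ + c) + c := by nlinarith
    have h5 : (0:ℝ) < 2 * (m:ℝ)^2 := by nlinarith [mul_pos hm0 hm0]
    exact mul_pos h5 h4
  have hkey := key_fixed (c := c) (δ := δ) hm1 hne' hα hδ hmono hc hc0 hK hK0
  obtain ⟨εstar, hεstar, hεsle⟩ : ∃ e : ℝ, 0 < e ∧ e ≤ min 1 (m*α*δ/(2*K)) :=
    ⟨min 1 (m*α*δ/(2*K)), lt_min one_pos (by positivity), le_rfl⟩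
  have hεs1 : εstar ≤ 1 := hεsle.trans (min_le_left _ _)
  have hεs2 : εstar ≤ m*α*δ/(2*K) := hεsle.trans (min_le_right _ _)
  have hev : ∀ᶠ ε in 𝓝[Set.Ioo (0:ℝ) 1] 0, ε ∈ Set.Ioo (0:ℝ) 1 ∧ ε ≤ εstar := by
    have h1 : ∀ᶠ ε in 𝓝[Set.Ioo (0:ℝ) 1] 0, ε ∈ Set.Ioo (0:ℝ) 1 :=
      eventually_mem_nhdsWithin
    have h2 : ∀ᶠ ε in 𝓝 (0:ℝ), ε ≤ εstar := eventually_le_nhds hεstar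
    exact h1.and (h2.filter_mono nhdsWithin_le_nhds)
  have hfp : ∀ ε : ℝ, ε ∈ Set.Ioo (0:ℝ) 1 → ε ≤ εstar →
      ∃ z : H, relaxComp m T ε z = z ∧ ‖z - xbar‖ ≤ 2*K/(m*α) * ε := by
    intro ε hε hεs
    exact hkey ε hε.1 (hε.2.le.trans (le_refl 1) |>.trans (le_refl 1) |>.trans le_rfl)
      (hεs.trans hεs2) |>.imp (fun z hz => hz)
  refine ⟨part1' hm1 hne' hα hδ hfix hmono,
    part2 hm1 hne' hα hδ hfix hmono hc hc0, ?_, ?_⟩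
  · exact hev.mono fun ε ⟨hε, hεs⟩ => (hfp ε hε hεs).imp (fun z hz => hz.1)
  · have hlimC : Tendsto (fun ε : ℝ => 2*K/(m*α) * ε) (𝓝[Set.Ioo (0:ℝ) 1] 0) (𝓝 0) := by
      have h0 : Tendsto (fun ε : ℝ => ε) (𝓝 (0:ℝ)) (𝓝 (0:ℝ)) := tendsto_id
      have h1 : Tendsto (fun ε : ℝ => 2*K/(m*α) * ε) (𝓝 0) (𝓝 (2*K/(m*α) * 0)) :=
        Filter.Tendsto.const_mul _ h0
      rw [mul_zero] at h1
      exact h1.mono_left nhdsWithin_le_nhds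
    refine tendsto_of_tendsto_of_tendsto_of_le_of_le' tendsto_const_nhds hlimC
      (Eventually.of_forall fun ε => Metric.infDist_nonneg) ?_
    refine hev.mono fun ε ⟨hε, hεs⟩ => ?_
    obtain ⟨z, hz1, hz2⟩ := hfp ε hε hεs
    calc Metric.infDist xbar {y | relaxComp m T ε y = y}
        ≤ dist xbar z := Metric.infDist_le_dist_of_mem hz1
      _ = ‖z - xbar‖ := by rw [dist_comm, dist_eq_norm]
      _ ≤ 2*K/(m*α) * ε := hz2
end

section
/- Let C_1, C_2 be nonempty closed convex subsets of a Hilbert space with projections P_1, P_2, let z be a minimizer of d_{C_1}² + d_{C_2}², and set a = P_1 z, b = P_2 z. Then z = (a+b)/2, and for every ε ∈ (0,1) the point z^ε = ((1−ε)a + b)/(2−ε) is a fixed point of R^ε = (Id+ε(P_2−Id))∘(Id+ε(P_1−Id)), with ‖z − z^ε‖ = ε‖b − a‖/(2(2−ε)) → 0 as ε → 0. -/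
/-!
The minimizer `z` of `d₁² + d₂²` is the midpoint of `a = P₁ z` and `b = P₂ z`: at the midpoint
`m` of `a, b` the objective is at most `‖b - a‖² / 2`, while at `z` Apollonius' theorem gives
`2 ‖z - m‖² + ‖b - a‖² / 2`. Hence `b - a` lies in the normal cone of `C₁` at `a` and `a - b` in
that of `C₂` at `b`. A projection is constant along normal rays, so on the segment through `a` and
`b` each relaxed projection only moves points along that segment, and `z^ε` is the point of it
where the two relaxed steps cancel.
-/

open Filter Topology
open scoped InnerProductSpace

def relax {V : Type*} [AddCommGroup V] [Module ℝ V] (ε : ℝ) (P : V → V) (p : V) : V :=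
  p + ε • (P p - p)

section

variable {H : Type*} [NormedAddCommGroup H]

def IsMetricProjection (C : Set H) (P : H → H) : Prop :=
  ∀ x, P x ∈ C ∧ ∀ y ∈ C, ‖x - P x‖ ≤ ‖x - y‖

namespace IsMetricProjection

variable {C : Set H} {P : H → H}

theorem infDist_eq (hP : IsMetricProjection C P) (x : H) :
    Metric.infDist x C = ‖x - P x‖ := by
  refine le_antisymm ?_ ?_
  · simpa only [dist_eq_norm] using Metric.infDist_le_dist_of_mem (x := x) (hP x).1
  · have : Nonempty C := ⟨⟨P x, (hP x).1⟩⟩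
    rw [Metric.infDist_eq_iInf]
    exact le_ciInf fun w => by simpa only [dist_eq_norm] using (hP x).2 w w.2

theorem norm_sub_eq_iInf (hP : IsMetricProjection C P) (x : H) :
    ‖x - P x‖ = ⨅ w : C, ‖x - w‖ := by
  rw [← hP.infDist_eq, Metric.infDist_eq_iInf]
  simp only [dist_eq_norm]

end IsMetricProjection

variable [InnerProductSpace ℝ H]

namespace IsMetricProjection

variable {C : Set H} {P : H → H}

theorem inner_sub_le_zero (hC : Convex ℝ C) (hP : IsMetricProjection C P) (x : H) :
    ∀ c ∈ C, ⟪x - P x, c - P x⟫_ℝ ≤ 0 :=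
  (norm_eq_iInf_iff_real_inner_le_zero hC (hP x).1).mp (hP.norm_sub_eq_iInf x)

theorem apply_eq_of_inner_le_zero (hC : Convex ℝ C) (hP : IsMetricProjection C P) {x a : H}
    (ha : a ∈ C) (h : ∀ c ∈ C, ⟪x - a, c - a⟫_ℝ ≤ 0) : P x = a := by
  -- adding the two variational inequalities, tested at each other's point, gives `‖P x - a‖² ≤ 0`
  have h₁ := h (P x) (hP x).1
  have h₂ := hP.inner_sub_le_zero hC x a ha
  have hsum : ⟪x - a, P x - a⟫_ℝ + ⟪x - P x, a - P x⟫_ℝ = ‖P x - a‖ ^ 2 := by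
    rw [← real_inner_self_eq_norm_sq, ← neg_sub (P x) a, inner_neg_right, ← sub_eq_add_neg,
      ← inner_sub_left]
    congr 1
    abel
  rw [← sub_eq_zero, ← norm_eq_zero]
  nlinarith [norm_nonneg (P x - a)]

theorem apply_add_smul_sub (hC : Convex ℝ C) (hP : IsMetricProjection C P) (x : H) {t : ℝ}
    (ht : 0 ≤ t) : P (P x + t • (x - P x)) = P x := by
  refine hP.apply_eq_of_inner_le_zero hC (hP x).1 fun c hc => ?_
  rw [add_sub_cancel_left, real_inner_smul_left]
  exact mul_nonpos_of_nonneg_of_nonpos ht (hP.inner_sub_le_zero hC x c hc)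

end IsMetricProjection

theorem eq_midpoint_of_forall_infDist_sq_add_le {C₁ C₂ : Set H} {P₁ P₂ : H → H}
    (hP₁ : IsMetricProjection C₁ P₁) (hP₂ : IsMetricProjection C₂ P₂) {z : H}
    (hz : ∀ w : H, Metric.infDist z C₁ ^ 2 + Metric.infDist z C₂ ^ 2
      ≤ Metric.infDist w C₁ ^ 2 + Metric.infDist w C₂ ^ 2) :
    z = (2:ℝ)⁻¹ • (P₁ z + P₂ z) := by
  set a := P₁ z
  set b := P₂ z
  have hapollonius :=
    EuclideanGeometry.dist_sq_add_dist_sq_eq_two_mul_dist_midpoint_sq_add_half_dist_sq z a b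
  set m := midpoint ℝ a b with hm
  have hm₁ : Metric.infDist m C₁ ≤ dist m a := Metric.infDist_le_dist_of_mem (hP₁ z).1
  have hm₂ : Metric.infDist m C₂ ≤ dist m b := Metric.infDist_le_dist_of_mem (hP₂ z).1
  have hma : dist m a = dist a b / 2 := by
    rw [dist_midpoint_left, Real.norm_two, inv_mul_eq_div]
  have hmb : dist m b = dist a b / 2 := by
    rw [dist_midpoint_right, Real.norm_two, inv_mul_eq_div]
  have hzm : dist z m = 0 := by
    have := hz m
    rw [hP₁.infDist_eq, hP₂.infDist_eq, ← dist_eq_norm, ← dist_eq_norm] at this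
    nlinarith [dist_nonneg (x := z) (y := m), Metric.infDist_nonneg (x := m) (s := C₁),
      Metric.infDist_nonneg (x := m) (s := C₂)]
  rw [dist_eq_zero.mp hzm, hm, midpoint_eq_smul_add, invOf_eq_inv]

theorem relax_relax_eq_self {C₁ C₂ : Set H} {P₁ P₂ : H → H}
    (hC₁ : Convex ℝ C₁) (hC₂ : Convex ℝ C₂)
    (hP₁ : IsMetricProjection C₁ P₁) (hP₂ : IsMetricProjection C₂ P₂) {z a b : H}
    (ha : P₁ z = a) (hb : P₂ z = b) (hz : z = (2:ℝ)⁻¹ • (a + b)) {ε : ℝ} (hε : ε < 2) :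
    relax ε P₂ (relax ε P₁ ((2 - ε)⁻¹ • ((1 - ε) • a + b))) = (2 - ε)⁻¹ • ((1 - ε) • a + b) := by
  subst hz
  have hε' : 2 - ε ≠ 0 := by linarith
  have ht : 0 ≤ 2 / (2 - ε) := div_nonneg zero_le_two (by linarith)
  set u := (2 - ε)⁻¹ • ((1 - ε) • a + b)
  -- `u` and `relax ε P₁ u` lie on the normal rays `a + t • (z - a)` and `b + t • (z - b)`,
  -- with `t = 2 / (2 - ε)`
  have h₁ : P₁ u = a := by
    convert hP₁.apply_add_smul_sub hC₁ ((2:ℝ)⁻¹ • (a + b)) ht using 2 <;> rw [ha]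
    match_scalars <;> field_simp; ring
  have h₂ : P₂ (relax ε P₁ u) = b := by
    convert hP₂.apply_add_smul_sub hC₂ ((2:ℝ)⁻¹ • (a + b)) ht using 2 <;> rw [hb]
    rw [relax, h₁]
    match_scalars <;> field_simp <;> ring
  rw [relax, h₂, relax, h₁]
  match_scalars <;> field_simp <;> ring

theorem norm_midpoint_sub_relaxedFixedPoint (a b : H) {ε : ℝ} (hε₀ : 0 ≤ ε) (hε : ε < 2) :
    ‖(2:ℝ)⁻¹ • (a + b) - (2 - ε)⁻¹ • ((1 - ε) • a + b)‖ = ε * ‖b - a‖ / (2 * (2 - ε)) := by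
  have hε' : 2 - ε ≠ 0 := by linarith
  have hdiff : (2:ℝ)⁻¹ • (a + b) - (2 - ε)⁻¹ • ((1 - ε) • a + b)
      = (ε / (2 * (2 - ε))) • (a - b) := by
    match_scalars <;> field_simp <;> ring
  rw [hdiff, norm_smul, norm_sub_rev, Real.norm_eq_abs,
    abs_of_nonneg (div_nonneg hε₀ (by linarith))]
  ring

end

theorem stmt18_general {H : Type*} [NormedAddCommGroup H] [InnerProductSpace ℝ H]
    (C1 C2 : Set H)
    (hv1 : Convex ℝ C1) (hv2 : Convex ℝ C2)
    (P1 P2 : H → H)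
    (hP1 : ∀ x, P1 x ∈ C1 ∧ ∀ y ∈ C1, ‖x - P1 x‖ ≤ ‖x - y‖)
    (hP2 : ∀ x, P2 x ∈ C2 ∧ ∀ y ∈ C2, ‖x - P2 x‖ ≤ ‖x - y‖)
    (z : H)
    (hz : ∀ w : H, Metric.infDist z C1 ^ 2 + Metric.infDist z C2 ^ 2
      ≤ Metric.infDist w C1 ^ 2 + Metric.infDist w C2 ^ 2) :
    z = (2:ℝ)⁻¹ • (P1 z + P2 z) ∧
    (∀ ε ∈ Set.Ioo (0:ℝ) 1,
      (fun p => p + ε • (P2 p - p))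
          ((fun p => p + ε • (P1 p - p)) ((2 - ε)⁻¹ • ((1 - ε) • P1 z + P2 z)))
        = (2 - ε)⁻¹ • ((1 - ε) • P1 z + P2 z) ∧
      ‖z - (2 - ε)⁻¹ • ((1 - ε) • P1 z + P2 z)‖
        = ε * ‖P2 z - P1 z‖ / (2 * (2 - ε))) ∧
    Tendsto (fun ε : ℝ => ε * ‖P2 z - P1 z‖ / (2 * (2 - ε)))
      (𝓝[Set.Ioo (0:ℝ) 1] 0) (𝓝 0) := by
  have hmid := eq_midpoint_of_forall_infDist_sq_add_le hP1 hP2 hz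
  refine ⟨hmid, fun ε ⟨hε₀, hε₁⟩ => ⟨?_, ?_⟩, ?_⟩
  · exact relax_relax_eq_self hv1 hv2 hP1 hP2 rfl rfl hmid (by linarith)
  · have := norm_midpoint_sub_relaxedFixedPoint (P1 z) (P2 z) hε₀.le (by linarith)
    rwa [← hmid] at this
  · have hcont : ContinuousAt (fun ε : ℝ => ε * ‖P2 z - P1 z‖ / (2 * (2 - ε))) 0 :=
      ContinuousAt.div (by fun_prop) (by fun_prop) (by norm_num)
    simpa using hcont.tendsto.mono_left nhdsWithin_le_nhds

theorem stmt18 {H : Type*} [NormedAddCommGroup H] [InnerProductSpace ℝ H] [CompleteSpace H]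
    (C1 C2 : Set H) (h1 : C1.Nonempty) (h2 : C2.Nonempty)
    (hc1 : IsClosed C1) (hc2 : IsClosed C2)
    (hv1 : Convex ℝ C1) (hv2 : Convex ℝ C2)
    (P1 P2 : H → H)
    (hP1 : ∀ x, P1 x ∈ C1 ∧ ∀ y ∈ C1, ‖x - P1 x‖ ≤ ‖x - y‖)
    (hP2 : ∀ x, P2 x ∈ C2 ∧ ∀ y ∈ C2, ‖x - P2 x‖ ≤ ‖x - y‖)
    (z : H)
    (hz : ∀ w : H, Metric.infDist z C1 ^ 2 + Metric.infDist z C2 ^ 2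
      ≤ Metric.infDist w C1 ^ 2 + Metric.infDist w C2 ^ 2) :
    z = (2:ℝ)⁻¹ • (P1 z + P2 z) ∧
    (∀ ε ∈ Set.Ioo (0:ℝ) 1,
      (fun p => p + ε • (P2 p - p))
          ((fun p => p + ε • (P1 p - p)) ((2 - ε)⁻¹ • ((1 - ε) • P1 z + P2 z)))
        = (2 - ε)⁻¹ • ((1 - ε) • P1 z + P2 z) ∧
      ‖z - (2 - ε)⁻¹ • ((1 - ε) • P1 z + P2 z)‖
        = ε * ‖P2 z - P1 z‖ / (2 * (2 - ε))) ∧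
    Tendsto (fun ε : ℝ => ε * ‖P2 z - P1 z‖ / (2 * (2 - ε)))
      (𝓝[Set.Ioo (0:ℝ) 1] 0) (𝓝 0) :=
  stmt18_general C1 C2 hv1 hv2 P1 P2 hP1 hP2 z hz
end

section
/- Let E_1,...,E_m be closed vector subspaces of a Hilbert space H, L = (1/m)∑ P_{E_i}, E = ⋂ E_i, and suppose ‖L ∘ P_{E^⊥}‖ < 1. Let x̄_i ∈ H and C_i = x̄_i + E_i with projections P_i. Then T = (1/m)∑ P_i is affine, T x = a + L x with a = (1/m)∑(x̄_i − P_{E_i} x̄_i), T has a fixed point z, and the set of minimizers of ∑ d_{C_i}² equals z + E. -/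
open Filter Topology

open RealInnerProductSpace

lemma stmt19_perp {H : Type*} [NormedAddCommGroup H] [InnerProductSpace ℝ H]
    (K : Submodule ℝ H) (x p : H) (hp : p ∈ K)
    (hmin : ∀ y ∈ K, ‖x - p‖ ≤ ‖x - y‖) : ∀ y ∈ K, ⟪x - p, y⟫ = 0 := by
  intro y hy
  set c : ℝ := ⟪x - p, y⟫ with hc
  have key : ∀ t : ℝ, 0 ≤ -2 * t * c + t ^ 2 * ‖y‖ ^ 2 := by
    intro t
    have h1 := hmin (p + t • y) (K.add_mem hp (K.smul_mem t hy))
    have h2 : x - (p + t • y) = (x - p) - t • y := by abel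
    have h3 : ‖(x - p) - t • y‖ ^ 2 = ‖x - p‖ ^ 2 - 2 * t * c + t ^ 2 * ‖y‖ ^ 2 := by
      rw [norm_sub_sq_real, real_inner_smul_right, norm_smul]
      rw [mul_pow, Real.norm_eq_abs, sq_abs, hc]; ring
    have h4 : ‖x - p‖ ^ 2 ≤ ‖(x - p) - t • y‖ ^ 2 := by
      rw [h2] at h1
      exact pow_le_pow_left₀ (norm_nonneg _) h1 2
    nlinarith
  by_cases hy0 : ‖y‖ = 0
  · have : y = 0 := norm_eq_zero.mp hy0
    simp [hc, this]
  · have hypos : (0:ℝ) < ‖y‖ ^ 2 := by positivity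
    have h6 := key (c / ‖y‖ ^ 2)
    have h7 : 0 ≤ -(c ^ 2) / ‖y‖ ^ 2 := by
      calc (0:ℝ) ≤ -2 * (c / ‖y‖^2) * c + (c / ‖y‖^2)^2 * ‖y‖^2 := h6
      _ = -(c ^ 2) / ‖y‖ ^ 2 := by field_simp; ring
    have h8 := mul_nonneg h7 hypos.le
    rw [div_mul_cancel₀ _ (ne_of_gt hypos)] at h8
    nlinarith [sq_nonneg c]

lemma stmt19_uniq {H : Type*} [NormedAddCommGroup H] [InnerProductSpace ℝ H]
    (K : Submodule ℝ H) (x p q : H) (hp : p ∈ K) (hq : q ∈ K)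
    (hp' : ∀ y ∈ K, ⟪x - p, y⟫ = 0) (hq' : ∀ y ∈ K, ⟪x - q, y⟫ = 0) : p = q := by
  have hpq : p - q ∈ K := K.sub_mem hp hq
  have h1 := hp' _ hpq
  have h2 := hq' _ hpq
  have : ⟪p - q, p - q⟫ = 0 := by
    have : (x - q) - (x - p) = p - q := by abel
    have h3 : ⟪x - q, p - q⟫ - ⟪x - p, p - q⟫ = ⟪(x - q) - (x - p), p - q⟫ :=
      (inner_sub_left _ _ _).symm
    rw [this] at h3
    rw [← h3, h1, h2]; ring
  have := inner_self_eq_zero.mp this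
  exact sub_eq_zero.mp this
theorem stmt19 {H : Type*} [NormedAddCommGroup H] [InnerProductSpace ℝ H] [CompleteSpace H]
    (m : ℕ) (hm : 1 ≤ m) (E : Fin m → Submodule ℝ H)
    (hEc : ∀ i, IsClosed (E i : Set H))
    (PE : Fin m → H → H)
    (hPE : ∀ i, ∀ x, PE i x ∈ E i ∧ ∀ y ∈ E i, ‖x - PE i x‖ ≤ ‖x - y‖)
    (Pperp : H → H)
    (hPperp : ∀ x, Pperp x ∈ (⨅ i, E i)ᗮ ∧ ∀ y ∈ (⨅ i, E i)ᗮ, ‖x - Pperp x‖ ≤ ‖x - y‖)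
    (hreg : ∃ ρ : ℝ, ρ < 1 ∧ ∀ x : H, ‖(m:ℝ)⁻¹ • ∑ i, PE i (Pperp x)‖ ≤ ρ * ‖x‖)
    (xb : Fin m → H)
    (C : Fin m → Set H) (hC : ∀ i, C i = {w | ∃ v ∈ E i, w = xb i + v})
    (P : Fin m → H → H)
    (hP : ∀ i, ∀ x, P i x ∈ C i ∧ ∀ y ∈ C i, ‖x - P i x‖ ≤ ‖x - y‖) :
    (∀ x : H, (m:ℝ)⁻¹ • (∑ i, P i x)
      = (m:ℝ)⁻¹ • (∑ i, (xb i - PE i (xb i))) + (m:ℝ)⁻¹ • (∑ i, PE i x)) ∧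
    ∃ z : H, (m:ℝ)⁻¹ • (∑ i, P i z) = z ∧
      {w : H | ∀ v : H, ∑ i, Metric.infDist w (C i) ^ 2
          ≤ ∑ i, Metric.infDist v (C i) ^ 2}
        = {u : H | ∃ e ∈ (⨅ i, E i), u = z + e} := by
  have hm0 : (m : ℝ) ≠ 0 := Nat.cast_ne_zero.mpr (by omega)
  set F : Submodule ℝ H := (⨅ i, E i)ᗮ with hF
  -- orthogonality characterizations
  have hPEperp : ∀ i x, ∀ y ∈ E i, ⟪x - PE i x, y⟫ = 0 :=
    fun i x => stmt19_perp (E i) x (PE i x) (hPE i x).1 (hPE i x).2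
  have hPEuniq : ∀ i x p, p ∈ E i → (∀ y ∈ E i, ⟪x - p, y⟫ = 0) → PE i x = p :=
    fun i x p hp hperp => stmt19_uniq (E i) x (PE i x) p (hPE i x).1 hp (hPEperp i x) hperp
  have hPEfix : ∀ i, ∀ v ∈ E i, PE i v = v := by
    intro i v hv
    exact hPEuniq i v v hv (fun y hy => by simp)
  have hPEsub : ∀ i x y, PE i (x - y) = PE i x - PE i y := by
    intro i x y
    refine hPEuniq i (x - y) _ ((E i).sub_mem (hPE i x).1 (hPE i y).1) ?_
    intro w hw
    have e1 : (x - y) - (PE i x - PE i y) = (x - PE i x) - (y - PE i y) := by abel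
    rw [e1, inner_sub_left, hPEperp i x w hw, hPEperp i y w hw]; ring
  have hPpperp : ∀ x, ∀ y ∈ F, ⟪x - Pperp x, y⟫ = 0 :=
    fun x => stmt19_perp F x (Pperp x) (hPperp x).1 (hPperp x).2
  have hPpfix : ∀ v ∈ F, Pperp v = v := by
    intro v hv
    exact stmt19_uniq F v (Pperp v) v (hPperp v).1 hv (hPpperp v) (fun y hy => by simp)
  -- memberships
  have hmemF : ∀ i, (E i)ᗮ ≤ F := fun i => Submodule.orthogonal_le (iInf_le E i)
  have hresF : ∀ i x, x - PE i x ∈ F := by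
    intro i x
    refine hmemF i ?_
    rw [Submodule.mem_orthogonal]
    intro u hu
    rw [real_inner_comm]
    exact hPEperp i x u hu
  have hPEmemF : ∀ i x, x ∈ F → PE i x ∈ F := by
    intro i x hx
    have : PE i x = x - (x - PE i x) := by abel
    rw [this]
    exact F.sub_mem hx (hresF i x)
  -- formula for P i
  have hPform : ∀ i x, P i x = (xb i - PE i (xb i)) + PE i x := by
    intro i x
    have hmem := (hP i x).1
    rw [hC i, Set.mem_setOf_eq] at hmem
    obtain ⟨v₀, hv₀, hPx⟩ := hmem
    have hmin : ∀ v ∈ E i, ‖(x - xb i) - v₀‖ ≤ ‖(x - xb i) - v‖ := by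
      intro v hv
      have h1 : (x - xb i) - v₀ = x - (xb i + v₀) := by abel
      have h2 : (x - xb i) - v = x - (xb i + v) := by abel
      rw [h1, h2, ← hPx]
      exact (hP i x).2 (xb i + v) (by rw [hC i]; exact ⟨v, hv, rfl⟩)
    have := hPEuniq i (x - xb i) v₀ hv₀ (stmt19_perp (E i) (x - xb i) v₀ hv₀ hmin)
    rw [hPEsub i x (xb i)] at this
    rw [hPx, ← this]
    abel
  have part1 : ∀ x : H, (m:ℝ)⁻¹ • (∑ i, P i x)
      = (m:ℝ)⁻¹ • (∑ i, (xb i - PE i (xb i))) + (m:ℝ)⁻¹ • (∑ i, PE i x) := by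
    intro x
    rw [← smul_add, ← Finset.sum_add_distrib]
    congr 1
    exact Finset.sum_congr rfl (fun i _ => hPform i x)
  refine ⟨part1, ?_⟩
  -- fixed point via Banach
  set a : H := (m:ℝ)⁻¹ • (∑ i, (xb i - PE i (xb i))) with ha_def
  set L : H → H := fun x => (m:ℝ)⁻¹ • (∑ i, PE i x) with hL_def
  have hLsub : ∀ x y, L (x - y) = L x - L y := by
    intro x y
    simp only [hL_def]
    rw [← smul_sub, ← Finset.sum_sub_distrib]
    congr 1
    exact Finset.sum_congr rfl (fun i _ => hPEsub i x y)
  have haF : a ∈ F :=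
    F.smul_mem _ (F.sum_mem (fun i _ => hresF i (xb i)))
  have hLF : ∀ x ∈ F, L x ∈ F := fun x hx =>
    F.smul_mem _ (F.sum_mem (fun i _ => hPEmemF i x hx))
  obtain ⟨ρ, hρ1, hρ2⟩ := hreg
  have hLcontr : ∀ x ∈ F, ‖L x‖ ≤ ρ * ‖x‖ := by
    intro x hx
    have := hρ2 x
    rwa [hPpfix x hx] at this
  haveI : CompleteSpace F := (Submodule.isClosed_orthogonal _).completeSpace_coe
  haveI : Nonempty F := ⟨⟨0, F.zero_mem⟩⟩
  set g : F → F := fun w => ⟨a + L w.1, F.add_mem haF (hLF _ w.2)⟩ with hg_def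
  have hcontr : ContractingWith ρ.toNNReal g := by
    constructor
    · exact_mod_cast Real.toNNReal_lt_one.mpr hρ1
    · refine LipschitzWith.of_dist_le_mul ?_
      intro w₁ w₂
      rw [Subtype.dist_eq, Subtype.dist_eq, dist_eq_norm, dist_eq_norm]
      have e1 : (g w₁ : H) - (g w₂ : H) = L ((w₁ : H) - (w₂ : H)) := by
        simp only [hg_def, hLsub]
        abel
      rw [e1]
      calc ‖L ((w₁ : H) - (w₂ : H))‖ ≤ ρ * ‖(w₁ : H) - (w₂ : H)‖ :=
            hLcontr _ (F.sub_mem w₁.2 w₂.2)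
        _ ≤ (ρ.toNNReal : ℝ) * ‖(w₁ : H) - (w₂ : H)‖ :=
            mul_le_mul_of_nonneg_right (Real.le_coe_toNNReal ρ) (norm_nonneg _)
  set z₀ : F := ContractingWith.fixedPoint g hcontr with hz₀
  have hfix₀ : g z₀ = z₀ := ContractingWith.fixedPoint_isFixedPt hcontr
  set z : H := (z₀ : H) with hz_def
  have hfix : a + L z = z := by
    have := congrArg (Subtype.val) hfix₀
    simpa [hg_def] using this
  have hfixed : (m:ℝ)⁻¹ • (∑ i, P i z) = z := by
    rw [part1 z]; exact hfix
  refine ⟨z, hfixed, ?_⟩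
  -- distance formula
  have hCne : ∀ i, (C i).Nonempty := by
    intro i
    exact ⟨xb i, by rw [hC i]; exact ⟨0, (E i).zero_mem, by simp⟩⟩
  have hdist : ∀ (i : Fin m) (w : H), Metric.infDist w (C i) = ‖w - P i w‖ := by
    intro i w
    refine le_antisymm ?_ ?_
    · have := Metric.infDist_le_dist_of_mem (x := w) (hP i w).1
      rwa [dist_eq_norm] at this
    · by_contra h
      push_neg at h
      obtain ⟨y, hy, hlt⟩ := (Metric.infDist_lt_iff (hCne i)).mp h
      rw [dist_eq_norm] at hlt
      exact absurd ((hP i w).2 y hy) (not_le.mpr hlt)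
  -- sum of residuals at z is zero
  have hsumPz : ∑ i, P i z = (m:ℝ) • z := by
    have := congrArg (fun u => (m:ℝ) • u) hfixed
    simpa [smul_smul, hm0] using this
  have hsum0 : ∑ i, (z - P i z) = 0 := by
    rw [Finset.sum_sub_distrib, hsumPz, Finset.sum_const, Finset.card_univ, Fintype.card_fin]
    rw [← Nat.cast_smul_eq_nsmul ℝ m z]
    abel
  -- residual orthogonality
  have hresperp : ∀ (i : Fin m) (u : H), ⟪z - P i z, PE i u⟫ = 0 := by
    intro i u
    have e1 : z - P i z = (z - xb i) - PE i (z - xb i) := by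
      rw [hPform i z, hPEsub i z (xb i)]
      abel
    rw [e1]
    exact hPEperp i (z - xb i) (PE i u) (hPE i u).1
  -- key identity
  have hkey : ∀ v : H, ∑ i, ‖v - P i v‖ ^ 2
      = ∑ i, ‖z - P i z‖ ^ 2 + ∑ i, ‖(v - z) - PE i (v - z)‖ ^ 2 := by
    intro v
    have hterm : ∀ i : Fin m, ‖v - P i v‖ ^ 2
        = ‖z - P i z‖ ^ 2 + 2 * ⟪z - P i z, v - z⟫ + ‖(v - z) - PE i (v - z)‖ ^ 2 := by
      intro i
      have e1 : v - P i v = (z - P i z) + ((v - z) - PE i (v - z)) := by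
        rw [hPform i v, hPform i z, hPEsub i v z]
        abel
      rw [e1, norm_add_sq_real]
      have e2 : ⟪z - P i z, (v - z) - PE i (v - z)⟫ = ⟪z - P i z, v - z⟫ := by
        rw [inner_sub_right, hresperp i (v - z)]; ring
      rw [e2]
    calc ∑ i, ‖v - P i v‖ ^ 2
        = ∑ i, (‖z - P i z‖ ^ 2 + 2 * ⟪z - P i z, v - z⟫ + ‖(v - z) - PE i (v - z)‖ ^ 2) :=
          Finset.sum_congr rfl (fun i _ => hterm i)
      _ = ∑ i, ‖z - P i z‖ ^ 2 + 2 * ⟪∑ i, (z - P i z), v - z⟫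
            + ∑ i, ‖(v - z) - PE i (v - z)‖ ^ 2 := by
          rw [Finset.sum_add_distrib, Finset.sum_add_distrib, sum_inner, ← Finset.mul_sum]
      _ = ∑ i, ‖z - P i z‖ ^ 2 + ∑ i, ‖(v - z) - PE i (v - z)‖ ^ 2 := by
          rw [hsum0]
          simp
  -- the set equality
  ext w
  simp only [Set.mem_setOf_eq]
  have hrw : ∀ u : H, ∑ i, Metric.infDist u (C i) ^ 2 = ∑ i, ‖u - P i u‖ ^ 2 :=
    fun u => Finset.sum_congr rfl (fun i _ => by rw [hdist i u])
  constructor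
  · intro hw
    have h1 := hw z
    rw [hrw w, hrw z, hkey w] at h1
    have h2 : ∑ i, ‖(w - z) - PE i (w - z)‖ ^ 2 ≤ 0 := by linarith
    have h3 : ∑ i, ‖(w - z) - PE i (w - z)‖ ^ 2 = 0 :=
      le_antisymm h2 (Finset.sum_nonneg (fun i _ => by positivity))
    have h4 : ∀ i ∈ Finset.univ, ‖(w - z) - PE i (w - z)‖ ^ 2 = 0 :=
      (Finset.sum_eq_zero_iff_of_nonneg (fun i _ => by positivity)).mp h3
    have h5 : w - z ∈ ⨅ i, E i := by
      rw [Submodule.mem_iInf]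
      intro i
      have := h4 i (Finset.mem_univ i)
      have h6 : (w - z) - PE i (w - z) = 0 := by
        have := pow_eq_zero_iff (n := 2) (by norm_num) |>.mp this
        exact norm_eq_zero.mp this
      have h7 : w - z = PE i (w - z) := by
        rw [sub_eq_zero] at h6; exact h6
      rw [h7]
      exact (hPE i (w - z)).1
    exact ⟨w - z, h5, by abel⟩
  · rintro ⟨e, he, rfl⟩ v
    rw [hrw _, hrw v, hkey v, hkey (z + e)]
    have he' : ∀ i, (z + e - z) - PE i (z + e - z) = 0 := by
      intro i
      have : z + e - z = e := by abel
      rw [this, hPEfix i e (Submodule.mem_iInf _ |>.mp he i), sub_self]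
    have : ∑ i, ‖(z + e - z) - PE i (z + e - z)‖ ^ 2 = 0 :=
      Finset.sum_eq_zero (fun i _ => by rw [he' i]; simp)
    rw [this]
    have : (0:ℝ) ≤ ∑ i, ‖(v - z) - PE i (v - z)‖ ^ 2 :=
      Finset.sum_nonneg (fun i _ => by positivity)
    linarith
end
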